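/- arXiv:math/0111165 — 6 statements merged into one kernel-verified Lean document; each statement's English description precedes it below -/
import Mathlib

section
/- For every positive integer d there exists a constant b > 0 with the following property: for every set N of unit vectors in EuclideanSpace ℝ (Fin d) such that ⟨n, m⟩ ≥ 0 for all n, m ∈ N, there exists a unit vector f ∈ EuclideanSpace ℝ (Fin d) with ⟨f, n⟩ > 1/b for every n ∈ N. -/
open scoped RealInnerProductSpace

/-!
By Carathéodory, a point `x` of the convex hull of `N` is a convex combination `∑ wᵢ nᵢ` of at
most `d + 1` vectors of `N`. Since the `nᵢ` are unit vectors with nonnegative pairwise inner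
products, `‖x‖² ≥ ∑ wᵢ² ≥ 1 / (d + 1)` by Cauchy–Schwarz. The point `v` of the closed convex hull
nearest to the origin therefore has `‖v‖ ≥ 1 / √(d + 1)`, and the variational inequality of the
projection gives `⟪v, n⟫ ≥ ‖v‖²` for every `n ∈ N`; so `f = v / ‖v‖` is a good direction.
-/

section

variable {E : Type*} [NormedAddCommGroup E] [InnerProductSpace ℝ E]

theorem sum_sq_le_norm_sq_sum_smul {ι : Type*} [Fintype ι] {w : ι → ℝ} {z : ι → E}
    (hw : ∀ i, 0 ≤ w i) (hz : ∀ i, ‖z i‖ = 1) (hzz : ∀ i j, 0 ≤ ⟪z i, z j⟫) :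
    ∑ i, w i ^ 2 ≤ ‖∑ i, w i • z i‖ ^ 2 := by
  have hexpand : ‖∑ i, w i • z i‖ ^ 2 = ∑ i, ∑ j, w i * (w j * ⟪z j, z i⟫) := by
    simp only [← real_inner_self_eq_norm_sq, sum_inner, inner_sum, real_inner_smul_left,
      real_inner_smul_right]
  rw [hexpand]
  refine Finset.sum_le_sum fun i _ => ?_
  have hdiag : w i ^ 2 = w i * (w i * ⟪z i, z i⟫) := by
    rw [real_inner_self_eq_norm_sq, hz i]; ring
  rw [hdiag]
  exact Finset.single_le_sum (f := fun j => w i * (w j * ⟪z j, z i⟫))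
    (fun j _ => mul_nonneg (hw i) (mul_nonneg (hw j) (hzz j i))) (Finset.mem_univ i)

theorem inv_finrank_succ_le_norm_sq_of_mem_convexHull [FiniteDimensional ℝ E] {N : Set E}
    (hN : ∀ n ∈ N, ‖n‖ = 1) (hNN : ∀ n ∈ N, ∀ m ∈ N, 0 ≤ ⟪n, m⟫) {x : E}
    (hx : x ∈ convexHull ℝ N) : (Module.finrank ℝ E + 1 : ℝ)⁻¹ ≤ ‖x‖ ^ 2 := by
  obtain ⟨ι, _, z, w, hzN, hz_indep, hw_pos, hw_sum, rfl⟩ :=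
    eq_pos_convex_span_of_mem_convexHull hx
  have hzN' : ∀ i, z i ∈ N := fun i => hzN ⟨i, rfl⟩
  have hcard : (Fintype.card ι : ℝ) ≤ Module.finrank ℝ E + 1 := by
    have := Submodule.finrank_le (vectorSpan ℝ (Set.range z))
    exact_mod_cast hz_indep.card_le_finrank_succ.trans (by omega)
  have hcauchy : (1 : ℝ) ≤ Fintype.card ι * ∑ i, w i ^ 2 := by
    simpa [hw_sum] using sq_sum_le_card_mul_sum_sq (s := Finset.univ) (f := w)
  have hdiag := sum_sq_le_norm_sq_sum_smul (fun i => (hw_pos i).le) (fun i => hN _ (hzN' i))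
    (fun i j => hNN _ (hzN' i) _ (hzN' j))
  rw [inv_le_iff_one_le_mul₀ (by positivity)]
  calc (1 : ℝ) ≤ Fintype.card ι * ∑ i, w i ^ 2 := hcauchy
    _ ≤ ‖∑ i, w i • z i‖ ^ 2 * (Module.finrank ℝ E + 1) := by rw [mul_comm]; gcongr

theorem inv_finrank_succ_le_norm_sq_of_mem_closure_convexHull [FiniteDimensional ℝ E]
    {N : Set E} (hN : ∀ n ∈ N, ‖n‖ = 1) (hNN : ∀ n ∈ N, ∀ m ∈ N, 0 ≤ ⟪n, m⟫) {x : E}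
    (hx : x ∈ closure (convexHull ℝ N)) : (Module.finrank ℝ E + 1 : ℝ)⁻¹ ≤ ‖x‖ ^ 2 :=
  closure_minimal (fun _ hy => inv_finrank_succ_le_norm_sq_of_mem_convexHull hN hNN hy)
    (isClosed_le continuous_const (continuous_norm.pow 2)) hx

theorem exists_mem_forall_norm_sq_le_inner {K : Set E} (hne : K.Nonempty) (hK : IsComplete K)
    (hconv : Convex ℝ K) : ∃ v ∈ K, ∀ y ∈ K, ‖v‖ ^ 2 ≤ ⟪v, y⟫ := by
  obtain ⟨v, hvK, hv⟩ := exists_norm_eq_iInf_of_complete_convex hne hK hconv 0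
  rw [norm_eq_iInf_iff_real_inner_le_zero hconv hvK] at hv
  refine ⟨v, hvK, fun y hy => ?_⟩
  have := hv y hy
  rw [zero_sub, inner_neg_left, inner_sub_right, real_inner_self_eq_norm_sq] at this
  linarith

theorem norm_le_inner_inv_norm_smul {v y : E} (h : ‖v‖ ^ 2 ≤ ⟪v, y⟫) :
    ‖v‖ ≤ ⟪‖v‖⁻¹ • v, y⟫ := by
  rw [real_inner_smul_left]
  rcases (norm_nonneg v).eq_or_lt with hv | hv
  · simp [← hv]
  · rw [le_inv_mul_iff₀ hv]
    linarith

theorem exists_norm_eq_one_forall_le_inner [FiniteDimensional ℝ E] {N : Set E} (hne : N.Nonempty)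
    (hN : ∀ n ∈ N, ‖n‖ = 1) (hNN : ∀ n ∈ N, ∀ m ∈ N, 0 ≤ ⟪n, m⟫) :
    ∃ f : E, ‖f‖ = 1 ∧ ∀ n ∈ N, (√(Module.finrank ℝ E + 1))⁻¹ ≤ ⟪f, n⟫ := by
  obtain ⟨v, hvK, hv⟩ := exists_mem_forall_norm_sq_le_inner
    (hne.mono (subset_convexHull ℝ N) |>.closure) isClosed_closure.isComplete
    (convex_convexHull ℝ N).closure
  have hv_lower : (√(Module.finrank ℝ E + 1))⁻¹ ≤ ‖v‖ := by
    rw [← Real.sqrt_inv, Real.sqrt_le_left (norm_nonneg v)]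
    exact inv_finrank_succ_le_norm_sq_of_mem_closure_convexHull hN hNN hvK
  have hv_pos : 0 < ‖v‖ := hv_lower.trans_lt' (by positivity)
  refine ⟨‖v‖⁻¹ • v, by rw [norm_smul, norm_inv, norm_norm, inv_mul_cancel₀ hv_pos.ne'],
    fun n hn => hv_lower.trans (norm_le_inner_inv_norm_smul (hv n ?_))⟩
  exact subset_closure (subset_convexHull ℝ N hn)

end

theorem exists_good_direction (d : ℕ) (hd : 0 < d) :
    ∃ b : ℝ, 0 < b ∧
      ∀ N : Set (EuclideanSpace ℝ (Fin d)),
        (∀ n ∈ N, ‖n‖ = 1) →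
        (∀ n ∈ N, ∀ m ∈ N, 0 ≤ ⟪n, m⟫) →
        ∃ f : EuclideanSpace ℝ (Fin d), ‖f‖ = 1 ∧ ∀ n ∈ N, 1 / b < ⟪f, n⟫ := by
  refine ⟨2 * √(d + 1), by positivity, fun N hN hNN => ?_⟩
  rcases N.eq_empty_or_nonempty with rfl | hne
  · exact ⟨EuclideanSpace.single ⟨0, hd⟩ 1, by simp, fun n hn => hn.elim⟩
  obtain ⟨f, hf, hfN⟩ := exists_norm_eq_one_forall_le_inner hne hN hNN
  rw [finrank_euclideanSpace_fin] at hfN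
  refine ⟨f, hf, fun n hn => (hfN n hn).trans_lt' ?_⟩
  rw [one_div, inv_lt_inv₀ (by positivity) (by positivity)]
  linarith [Real.sqrt_pos.2 (by positivity : (0 : ℝ) < d + 1)]
end

section
/- Let d and k be positive integers and let v : Fin k → EuclideanSpace ℝ (Fin d) be a finite family of vectors. Suppose there exists a unit vector n with ⟨n, v i⟩ > 0 for every i. Then there is exactly one unit vector f such that for every unit vector g one has min_{i} ⟨g, v i⟩ ≤ min_{i} ⟨f, v i⟩; i.e., the unit vector maximizing the minimum of the inner products with the v i is unique. -/
open scoped RealInnerProductSpace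

theorem unique_maximizing_direction (d k : ℕ) (hd : 0 < d) (hk : 0 < k)
    (v : Fin k → EuclideanSpace ℝ (Fin d))
    (hpos : ∃ n : EuclideanSpace ℝ (Fin d), ‖n‖ = 1 ∧ ∀ i, 0 < ⟪n, v i⟫) :
    ∃! f : EuclideanSpace ℝ (Fin d), ‖f‖ = 1 ∧
      ∀ g : EuclideanSpace ℝ (Fin d), ‖g‖ = 1 →
        (Finset.univ.inf' (Finset.univ_nonempty_iff.mpr ⟨⟨0, hk⟩⟩)
            fun i => ⟪g, v i⟫) ≤
        (Finset.univ.inf' (Finset.univ_nonempty_iff.mpr ⟨⟨0, hk⟩⟩)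
            fun i => ⟪f, v i⟫) := by
  obtain ⟨n, hn1, hnpos⟩ := hpos
  have hne : (Finset.univ : Finset (Fin k)).Nonempty :=
    Finset.univ_nonempty_iff.mpr ⟨⟨0, hk⟩⟩
  set F : EuclideanSpace ℝ (Fin d) → ℝ :=
    fun f => Finset.univ.inf' hne fun i => ⟪f, v i⟫ with hF
  -- continuity
  have hFc : Continuous F := by
    apply Continuous.finset_inf'_apply
    intro i _
    exact continuous_id.inner continuous_const
  -- homogeneity for nonneg scalars
  have hsmul : ∀ (c : ℝ) (f : EuclideanSpace ℝ (Fin d)), 0 ≤ c → F (c • f) = c * F f := by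
    intro c f hc
    have h1 : ∀ i, ⟪c • f, v i⟫ = c * ⟪f, v i⟫ := fun i => real_inner_smul_left f (v i) c
    apply le_antisymm
    · obtain ⟨i, _, hi⟩ := Finset.exists_mem_eq_inf' hne fun i => ⟪f, v i⟫
      calc F (c • f) ≤ ⟪c • f, v i⟫ := Finset.inf'_le _ (Finset.mem_univ i)
        _ = c * F f := by rw [h1 i, ← hi]
    · apply Finset.le_inf'
      intro i _
      rw [h1 i]
      exact mul_le_mul_of_nonneg_left (Finset.inf'_le _ (Finset.mem_univ i)) hc
  -- superadditivity
  have hadd : ∀ f g, F f + F g ≤ F (f + g) := by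
    intro f g
    apply Finset.le_inf'
    intro i _
    rw [inner_add_left]
    exact add_le_add (Finset.inf'_le _ (Finset.mem_univ i))
      (Finset.inf'_le _ (Finset.mem_univ i))
  -- existence of maximizer on sphere
  have hsph : IsCompact (Metric.sphere (0 : EuclideanSpace ℝ (Fin d)) 1) :=
    isCompact_sphere 0 1
  have hnmem : n ∈ Metric.sphere (0 : EuclideanSpace ℝ (Fin d)) 1 := by
    simp [hn1]
  obtain ⟨f, hfmem, hfmax⟩ := hsph.exists_isMaxOn ⟨n, hnmem⟩ hFc.continuousOn
  have hf1 : ‖f‖ = 1 := by simpa using hfmem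
  have hfprop : ∀ g : EuclideanSpace ℝ (Fin d), ‖g‖ = 1 → F g ≤ F f := by
    intro g hg
    exact hfmax (by simp [hg])
  -- positive value
  have hFn : 0 < F n := by
    apply Finset.lt_inf'_iff hne |>.mpr
    intro i _
    exact hnpos i
  have hFf : 0 < F f := lt_of_lt_of_le hFn (hfprop n hn1)
  refine ⟨f, ⟨hf1, hfprop⟩, ?_⟩
  rintro g ⟨hg1, hgprop⟩
  by_contra hne'
  have hFeq : F g = F f := le_antisymm (hfprop g hg1) (hgprop f hf1)
  have hFg : 0 < F g := hFeq ▸ hFf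
  -- strict convexity
  have hray : ¬ SameRay ℝ g f := by
    intro h
    exact hne' (h.eq_of_norm_eq (hg1.trans hf1.symm))
  have hlt : ‖g + f‖ < 2 := by
    have := norm_add_lt_of_not_sameRay hray
    rwa [hg1, hf1, one_add_one_eq_two] at this
  have hs_pos : 0 < F (g + f) := lt_of_lt_of_le (by linarith [hadd g f]) (le_refl _)
  have hs_ne : g + f ≠ 0 := by
    intro h
    rw [h] at hs_pos
    have : F (0 : EuclideanSpace ℝ (Fin d)) = 0 := by
      have := hsmul 0 0 le_rfl
      simpa using this
    linarith
  have hns : 0 < ‖g + f‖ := norm_pos_iff.mpr hs_ne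
  set h := ‖g + f‖⁻¹ • (g + f) with hh
  have hh1 : ‖h‖ = 1 := by
    rw [hh, norm_smul, norm_inv, norm_norm, inv_mul_cancel₀ hns.ne']
  have hFh : F h = ‖g + f‖⁻¹ * F (g + f) := hsmul _ _ (by positivity)
  have hFhge : F f < F h := by
    rw [hFh]
    have h2 : 2 * F f ≤ F (g + f) := by
      have := hadd g f
      linarith [hFeq]
    calc F f = ‖g + f‖⁻¹ * (‖g + f‖ * F f) := by
          field_simp
      _ < ‖g + f‖⁻¹ * (2 * F f) := by
          apply mul_lt_mul_of_pos_left _ (by positivity)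
          exact mul_lt_mul_of_pos_right hlt hFf
      _ ≤ ‖g + f‖⁻¹ * F (g + f) := by
          apply mul_le_mul_of_nonneg_left h2 (by positivity)
  exact absurd (hfprop h hh1) (not_le.mpr hFhge)
end

section
/- Let E be a real inner product space, u ∈ E a unit vector, x₀ ∈ E, m a positive integer, and y : Fin m → E points satisfying ⟨y i − x₀, u⟩ ≥ 1 for all i. If c ∈ E is a Chebyshev center of the points y i, i.e., for every x ∈ E one has max_i dist(c, y i) ≤ max_i dist(x, y i), then ⟨c − x₀, u⟩ > 0. -/
open scoped RealInnerProductSpace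

theorem chebyshev_center_positive_side
    (E : Type*) [NormedAddCommGroup E] [InnerProductSpace ℝ E]
    (u : E) (hu : ‖u‖ = 1) (x₀ : E) (m : ℕ) (hm : 0 < m)
    (y : Fin m → E) (hy : ∀ i, 1 ≤ ⟪y i - x₀, u⟫)
    (c : E)
    (hc : ∀ x : E,
        (Finset.univ.sup' (Finset.univ_nonempty_iff.mpr ⟨⟨0, hm⟩⟩)
            fun i => dist c (y i)) ≤
        (Finset.univ.sup' (Finset.univ_nonempty_iff.mpr ⟨⟨0, hm⟩⟩)
            fun i => dist x (y i))) :
    0 < ⟪c - x₀, u⟫ := by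
  by_contra h
  push_neg at h
  have hne : (Finset.univ : Finset (Fin m)).Nonempty :=
    Finset.univ_nonempty_iff.mpr ⟨⟨0, hm⟩⟩
  set M := Finset.univ.sup' hne (fun i => dist c (y i)) with hM
  have hM0 : 0 ≤ M :=
    le_trans dist_nonneg (Finset.le_sup' (fun i => dist c (y i)) (Finset.mem_univ ⟨0, hm⟩))
  have key : ∀ i, dist (c + u) (y i) < M := by
    intro i
    have h1 : ⟪c - y i, u⟫ ≤ -1 := by
      have e : c - y i = (c - x₀) - (y i - x₀) := by abel
      rw [e, inner_sub_left]
      have := hy i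
      linarith
    have hle : dist c (y i) ≤ M :=
      Finset.le_sup' (fun i => dist c (y i)) (Finset.mem_univ i)
    have hsq : dist (c + u) (y i) ^ 2 < M ^ 2 := by
      rw [dist_eq_norm]
      have e2 : c + u - y i = (c - y i) + u := by abel
      rw [e2, norm_add_sq_real, hu]
      have hd : dist c (y i) = ‖c - y i‖ := dist_eq_norm c (y i)
      nlinarith [dist_nonneg (x := c) (y := y i), norm_nonneg ((c - y i) + u)]
    exact lt_of_pow_lt_pow_left₀ 2 hM0 hsq
  have h2 := hc (c + u)
  have h3 : Finset.univ.sup' hne (fun i => dist (c + u) (y i)) < M :=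
    (Finset.sup'_lt_iff hne).mpr fun i _ => key i
  exact absurd (lt_of_le_of_lt h2 h3) (lt_irrefl M)
end

section
/- For every positive integer n there exists ε > 0 such that the following holds: for every matrix A ∈ Matrix (Fin n) (Fin n) ℝ, if |A i j − (1 : Matrix (Fin n) (Fin n) ℝ) i j| < ε for all indices i, j, and every coefficient of the characteristic polynomial of A is an integer (i.e., lies in the range of the cast ℤ → ℝ), then A − 1 is nilpotent (A is unipotent). -/
open Polynomial

lemma continuous_charpoly_coeff (n : ℕ) (k : ℕ) :
    Continuous fun A : Fin n → Fin n → ℝ => (Matrix.of A).charpoly.coeff k := by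
  have h : (fun A : Fin n → Fin n → ℝ => (Matrix.of A).charpoly.coeff k) =
      fun A => MvPolynomial.eval (fun p : Fin n × Fin n => A p.1 p.2)
        ((Matrix.charpoly.univ ℝ (Fin n)).coeff k) := by
    funext A
    rw [show (MvPolynomial.eval (fun p : Fin n × Fin n => A p.1 p.2)) =
        MvPolynomial.eval₂Hom (RingHom.id ℝ) (fun p : Fin n × Fin n => A p.1 p.2) from rfl,
      Matrix.charpoly.univ_coeff_eval₂Hom]
    rfl
  rw [h]
  exact (MvPolynomial.continuous_eval _).comp
    (continuous_pi fun p => (continuous_apply p.2).comp (continuous_apply p.1))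

lemma charpoly_one' (n : ℕ) :
    (1 : Matrix (Fin n) (Fin n) ℝ).charpoly = (X - C 1) ^ n := by
  have h : Matrix.charmatrix (1 : Matrix (Fin n) (Fin n) ℝ) =
      Matrix.diagonal fun _ => (X : ℝ[X]) - C 1 := by
    ext i j
    by_cases h : i = j <;>
      simp [h, Matrix.charmatrix_apply_eq, Matrix.charmatrix_apply_ne,
        Matrix.one_apply, Matrix.diagonal]
  rw [Matrix.charpoly, h, Matrix.det_diagonal, Finset.prod_const, Finset.card_univ,
    Fintype.card_fin]

lemma charpoly_one_coeff_int (n k : ℕ) :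
    (1 : Matrix (Fin n) (Fin n) ℝ).charpoly.coeff k ∈ Set.range (Int.cast : ℤ → ℝ) := by
  rw [charpoly_one' n]
  have h : ((X - C 1 : ℝ[X]) ^ n) = Polynomial.map (Int.castRingHom ℝ) ((X - C 1) ^ n) := by
    rw [Polynomial.map_pow, Polynomial.map_sub, Polynomial.map_X, Polynomial.map_C]
    norm_num
  rw [h, Polynomial.coeff_map]
  exact ⟨_, rfl⟩

theorem near_identity_integral_charpoly_unipotent (n : ℕ) (hn : 0 < n) :
    ∃ ε : ℝ, 0 < ε ∧
      ∀ A : Matrix (Fin n) (Fin n) ℝ,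
        (∀ i j, |A i j - (1 : Matrix (Fin n) (Fin n) ℝ) i j| < ε) →
        (∀ k, A.charpoly.coeff k ∈ Set.range (Int.cast : ℤ → ℝ)) →
        IsNilpotent (A - 1) := by
  have hδ : ∀ k : Fin (n + 1), ∃ δ : ℝ, 0 < δ ∧
      ∀ B : Fin n → Fin n → ℝ,
        dist B (fun i j => (1 : Matrix (Fin n) (Fin n) ℝ) i j) < δ →
        |(Matrix.of B).charpoly.coeff (k : ℕ) -
          (1 : Matrix (Fin n) (Fin n) ℝ).charpoly.coeff (k : ℕ)| < 1 := by
    intro k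
    have hc : ContinuousAt (fun B : Fin n → Fin n → ℝ => (Matrix.of B).charpoly.coeff (k : ℕ))
        (fun i j => (1 : Matrix (Fin n) (Fin n) ℝ) i j) :=
      (continuous_charpoly_coeff n k).continuousAt
    rcases Metric.continuousAt_iff.1 hc 1 one_pos with ⟨δ, hδpos, hδ'⟩
    refine ⟨δ, hδpos, fun B hB => ?_⟩
    have := hδ' hB
    rw [Real.dist_eq] at this
    exact this
  choose δ hδpos hδ using hδ
  set ε : ℝ := Finset.univ.inf' Finset.univ_nonempty δ with hε
  refine ⟨ε, (Finset.lt_inf'_iff _).2 fun k _ => hδpos k, ?_⟩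
  intro A hA hint
  have hdist : ∀ k : Fin (n + 1),
      dist (fun i j => A i j) (fun i j => (1 : Matrix (Fin n) (Fin n) ℝ) i j) < δ k := by
    intro k
    have hεle : ε ≤ δ k := Finset.inf'_le _ (Finset.mem_univ k)
    have h0 : 0 < δ k := hδpos k
    rw [dist_pi_lt_iff h0]
    intro i
    rw [dist_pi_lt_iff h0]
    intro j
    calc dist (A i j) ((1 : Matrix (Fin n) (Fin n) ℝ) i j)
        = |A i j - (1 : Matrix (Fin n) (Fin n) ℝ) i j| := Real.dist_eq _ _
      _ < ε := hA i j
      _ ≤ δ k := hεle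
  have hcoeff : ∀ k : ℕ,
      A.charpoly.coeff k = (1 : Matrix (Fin n) (Fin n) ℝ).charpoly.coeff k := by
    intro k
    by_cases hk : k ≤ n
    · have hlt := hδ ⟨k, Nat.lt_succ_of_le hk⟩ (fun i j => A i j)
        (hdist ⟨k, Nat.lt_succ_of_le hk⟩)
      have hAof : Matrix.of (fun i j => A i j) = A := rfl
      rw [hAof] at hlt
      obtain ⟨a, ha⟩ := hint k
      obtain ⟨b, hb⟩ := charpoly_one_coeff_int n k
      rw [← ha, ← hb] at hlt ⊢
      norm_cast
      have h2 : ((|a - b| : ℤ) : ℝ) < 1 := by push_cast; exact hlt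
      have h3 : |a - b| < 1 := by exact_mod_cast h2
      rw [abs_lt] at h3
      omega
    · push_neg at hk
      have h1 : A.charpoly.natDegree = n := by
        simpa using A.charpoly_natDegree_eq_dim
      have h2 : (1 : Matrix (Fin n) (Fin n) ℝ).charpoly.natDegree = n := by
        simpa using (1 : Matrix (Fin n) (Fin n) ℝ).charpoly_natDegree_eq_dim
      rw [Polynomial.coeff_eq_zero_of_natDegree_lt (lt_of_le_of_lt h1.le hk),
        Polynomial.coeff_eq_zero_of_natDegree_lt (lt_of_le_of_lt h2.le hk)]
  have hcp : A.charpoly = (X - C 1) ^ n := by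
    rw [← charpoly_one' n]
    exact Polynomial.ext hcoeff
  refine ⟨n, ?_⟩
  have hch := A.aeval_self_charpoly
  rw [hcp] at hch
  simpa [map_pow, map_sub, aeval_X, aeval_C, Algebra.algebraMap_eq_smul_one] using hch
end

section
/- For every positive integer n there exists ε > 0 such that: for every monic polynomial p ∈ ℤ[X] with natDegree p = n, writing M for the product, over the multiset of complex roots of p (counted with multiplicity), of max(1, |z|), one has either M = 1 or M ≥ 1 + ε. -/
/-!
For monic `p`, the product is the Mahler measure of `p`. By Northcott's theorem there are only
finitely many integer polynomials of degree at most `n` with Mahler measure at most `2`, so only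
finitely many values in `(1, 2]` occur, and `ε` can be taken below the distance from `1` to the
smallest of them.
-/

open Polynomial Set

theorem Polynomial.Monic.mahlerMeasure_eq_prod_roots {p : ℂ[X]} (hp : p.Monic) :
    p.mahlerMeasure = (p.roots.map fun z ↦ max 1 ‖z‖).prod := by
  simp [mahlerMeasure_eq_leadingCoeff_mul_prod_roots, hp.leadingCoeff]

theorem Set.exists_pos_forall_add_le_of_finite_inter_Ioc {s : Set ℝ} {a b : ℝ} (hab : a < b)
    (hs : (s ∩ Ioc a b).Finite) : ∃ ε > 0, ∀ x ∈ s, a < x → a + ε ≤ x := by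
  obtain ⟨m, hm, hmin⟩ :=
    (insert b (s ∩ Ioc a b)).exists_min_image id (hs.insert b) (insert_nonempty _ _)
  have ham : a < m := by
    rcases hm with rfl | ⟨-, ham, -⟩
    exacts [hab, ham]
  refine ⟨m - a, sub_pos.mpr ham, fun x hx hax ↦ ?_⟩
  rw [add_sub_cancel]
  rcases le_or_gt x b with hxb | hbx
  · exact hmin x (.inr ⟨hx, hax, hxb⟩)
  · exact (hmin b (.inl rfl)).trans hbx.le

theorem mahler_measure_gap_general (n : ℕ) :
    ∃ ε : ℝ, 0 < ε ∧
      ∀ p : Polynomial ℤ, p.Monic → p.natDegree = n →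
        (((p.map (Int.castRingHom ℂ)).roots.map
            fun z => max 1 ‖z‖).prod = 1 ∨
         1 + ε ≤ ((p.map (Int.castRingHom ℂ)).roots.map
            fun z => max 1 ‖z‖).prod) := by
  let M : ℤ[X] → ℝ := fun p ↦ (p.map (Int.castRingHom ℂ)).mahlerMeasure
  have hM {p : ℤ[X]} (hp : p.Monic) :
      M p = ((p.map (Int.castRingHom ℂ)).roots.map fun z => max 1 ‖z‖).prod :=
    (hp.map _).mahlerMeasure_eq_prod_roots
  have hfin : (M '' {p | p.Monic ∧ p.natDegree = n} ∩ Ioc 1 2).Finite := by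
    refine ((finite_mahlerMeasure_le n 2).image M).subset ?_
    rintro _ ⟨⟨p, ⟨-, rfl⟩, rfl⟩, -, h2⟩
    exact ⟨p, ⟨le_rfl, by exact_mod_cast h2⟩, rfl⟩
  obtain ⟨ε, hε, hgap⟩ := exists_pos_forall_add_le_of_finite_inter_Ioc one_lt_two hfin
  refine ⟨ε, hε, fun p hp hdeg ↦ ?_⟩
  rw [← hM hp]
  rcases (hM hp ▸ one_le_prod_max_one_norm_roots _ : 1 ≤ M p).eq_or_lt with h | h
  · exact .inl h.symm
  · exact .inr (hgap _ ⟨p, ⟨hp, hdeg⟩, rfl⟩ h)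

theorem mahler_measure_gap (n : ℕ) (hn : 0 < n) :
    ∃ ε : ℝ, 0 < ε ∧
      ∀ p : Polynomial ℤ, p.Monic → p.natDegree = n →
        (((p.map (Int.castRingHom ℂ)).roots.map
            fun z => max 1 ‖z‖).prod = 1 ∨
         1 + ε ≤ ((p.map (Int.castRingHom ℂ)).roots.map
            fun z => max 1 ‖z‖).prod) :=
  mahler_measure_gap_general n
end

section
/- For every positive integer n there exists ε > 0 such that: if p ∈ ℤ[X] is monic of natDegree n and every complex root z of p (i.e., every element of the multiset of roots of p mapped to ℂ) satisfies |z − 1| < ε, then p = (X − 1)^n. -/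
/-!
Write `p = (X - 1)^m * q` with `q(1) ≠ 0`. Every complex root `z` of `q` is a root of `p`, so if
all roots of `p` lie within `r < 1` of `1`, then `|q(1)| = ∏ |1 - z| ≤ r^(deg q)`. Since `q(1)` is a
nonzero integer this forces `deg q = 0`, and a monic constant is `1`.
-/

open Polynomial

theorem Polynomial.Splits.norm_eval_le_pow_natDegree {K : Type*} [NormedField K] {f : K[X]}
    (hf : f.Splits) (hm : f.Monic) {x : K} {r : ℝ} (h : ∀ z ∈ f.roots, ‖z - x‖ ≤ r) :
    ‖f.eval x‖ ≤ r ^ f.natDegree := by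
  rw [hf.eval_eq_prod_roots_of_monic hm, hf.natDegree_eq_card_roots]
  calc ‖(f.roots.map (x - ·)).prod‖ = (f.roots.map (‖x - ·‖)).prod := by
        rw [← normHom_apply (α := K), map_multiset_prod, Multiset.map_map]; rfl
    _ ≤ (f.roots.map fun _ ↦ r).prod :=
        Multiset.prod_map_le_prod_map₀ _ _ (fun _ _ ↦ norm_nonneg _)
          fun z hz ↦ norm_sub_rev x z ▸ h z hz
    _ = r ^ f.roots.card := by rw [Multiset.map_const', Multiset.prod_replicate]

theorem Polynomial.isRoot_of_roots_near {p : ℤ[X]} (hm : p.Monic) (hd : 0 < p.natDegree)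
    {a : ℤ} {r : ℝ} (hr₀ : 0 ≤ r) (hr : r < 1)
    (h : ∀ z ∈ (p.map (Int.castRingHom ℂ)).roots, ‖z - a‖ ≤ r) : p.IsRoot a := by
  have hsplit : (p.map (Int.castRingHom ℂ)).Splits := IsAlgClosed.splits _
  have hlt : ‖((p.eval a : ℤ) : ℂ)‖ < 1 := by
    calc ‖((p.eval a : ℤ) : ℂ)‖ = ‖(p.map (Int.castRingHom ℂ)).eval (a : ℂ)‖ := by
          rw [eval_intCast_map, eq_intCast, Int.cast_id]
      _ ≤ r ^ p.natDegree := by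
          simpa [hm.natDegree_map] using hsplit.norm_eval_le_pow_natDegree (hm.map _) h
      _ < 1 := pow_lt_one₀ hr₀ hr hd.ne'
  rwa [Complex.norm_intCast, ← Int.cast_abs, ← Int.cast_one, Int.cast_lt, Int.abs_lt_one_iff]
    at hlt

theorem Polynomial.eq_X_sub_C_pow_of_roots_near {p : ℤ[X]} (hm : p.Monic) {a : ℤ} {r : ℝ}
    (hr₀ : 0 ≤ r) (hr : r < 1) (h : ∀ z ∈ (p.map (Int.castRingHom ℂ)).roots, ‖z - a‖ ≤ r) :
    p = (X - C a) ^ p.natDegree := by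
  obtain ⟨q, hpq, hq⟩ := p.exists_eq_pow_rootMultiplicity_mul_and_not_dvd hm.ne_zero a
  have hqm : q.Monic := ((monic_X_sub_C a).pow _).of_mul_monic_left (hpq ▸ hm)
  have hq_roots : ∀ z ∈ (q.map (Int.castRingHom ℂ)).roots, ‖z - a‖ ≤ r := by
    refine fun z hz ↦ h z (Multiset.subset_of_le (roots.le_of_dvd (hm.map _).ne_zero ?_) hz)
    exact Polynomial.map_dvd _ (hpq ▸ dvd_mul_left q _)
  have hq_deg : q.natDegree = 0 := by
    by_contra hq_deg
    exact hq (dvd_iff_isRoot.mpr (isRoot_of_roots_near hqm (Nat.pos_of_ne_zero hq_deg) hr₀ hr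
      hq_roots))
  rw [hqm.natDegree_eq_zero.mp hq_deg, mul_one] at hpq
  rw [hpq, natDegree_pow, natDegree_X_sub_C, mul_one]

theorem roots_near_one_eq_pow_general (n : ℕ) :
    ∃ ε : ℝ, 0 < ε ∧
      ∀ p : Polynomial ℤ, p.Monic → p.natDegree = n →
        (∀ z ∈ (p.map (Int.castRingHom ℂ)).roots, ‖z - 1‖ < ε) →
        p = (Polynomial.X - 1) ^ n := by
  refine ⟨1 / 2, one_half_pos, fun p hm hd h ↦ ?_⟩
  have h_le : ∀ z ∈ (p.map (Int.castRingHom ℂ)).roots, ‖z - ((1 : ℤ) : ℂ)‖ ≤ 1 / 2 :=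
    fun z hz ↦ by simpa using (h z hz).le
  simpa [hd] using eq_X_sub_C_pow_of_roots_near hm one_half_pos.le one_half_lt_one h_le

theorem roots_near_one_eq_pow (n : ℕ) (hn : 0 < n) :
    ∃ ε : ℝ, 0 < ε ∧
      ∀ p : Polynomial ℤ, p.Monic → p.natDegree = n →
        (∀ z ∈ (p.map (Int.castRingHom ℂ)).roots, ‖z - 1‖ < ε) →
        p = (Polynomial.X - 1) ^ n :=
  roots_near_one_eq_pow_general n
end
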